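/- arXiv:2011.10333 — 2 statements merged into one kernel-verified Lean document; each statement's English description precedes it below -/
import Mathlib

section
/- Let q ∈ (-1,1) \ {0} and let α, γ be the operators on ℓ²(ℕ) ⊗ ℓ²(ℤ) defined on basis vectors by α(e_i ⊗ f_j) = √(1 - q^{2i}) e_{i-1} ⊗ f_j and γ(e_i ⊗ f_j) = q^i e_i ⊗ f_{j+1}. Then these operators are bounded and satisfy the SU_q(2) relations: γ*γ = γγ*, αγ = qγα, αγ* = qγ*α, α*α + γ*γ = 1, and αα* + q²γ*γ = 1. -/
/-!
Both operators are weighted composition operators `x ↦ w · (x ∘ σ)` with `σ` injective and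
`|w| ≤ 1`, hence contractions of `ℓ²`. An operator sending each `e_k` to `v k • e_{τ k}` has
adjoint `y ↦ conj v · (y ∘ τ)`, so `α*` and `γ*` are explicit as well, and every relation
becomes a pointwise identity between coefficients; the only one with content is
`√(1 - q^{2i})² + q^{2i} = 1`, valid because `|q| ≤ 1`.
-/

open scoped ENNReal ComplexConjugate InnerProductSpace lp
open ContinuousLinearMap (adjoint)
open Function (injective_id)

namespace lp

section WeightedComposition

variable {ι 𝕜 : Type*} [NormedField 𝕜] {p : ℝ≥0∞} {σ : ι → ι} {w : ι → 𝕜}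

theorem sum_rpow_norm_mul_comp_le (hp : 0 < p.toReal) (hσ : σ.Injective)
    (hw : ∀ k, ‖w k‖ ≤ 1) (x : lp (fun _ : ι => 𝕜) p) (s : Finset ι) :
    ∑ k ∈ s, ‖w k * x (σ k)‖ ^ p.toReal ≤ ‖x‖ ^ p.toReal :=
  calc ∑ k ∈ s, ‖w k * x (σ k)‖ ^ p.toReal
      ≤ ∑ k ∈ s, ‖x (σ k)‖ ^ p.toReal := by
        gcongr with k
        rw [norm_mul]
        exact mul_le_of_le_one_left (norm_nonneg _) (hw k)
    _ = ∑ m ∈ s.map ⟨σ, hσ⟩, ‖x m‖ ^ p.toReal :=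
        (Finset.sum_map s ⟨σ, hσ⟩ fun m => ‖x m‖ ^ p.toReal).symm
    _ ≤ ‖x‖ ^ p.toReal := lp.sum_rpow_le_norm_rpow hp x _

variable [Fact (1 ≤ p)]

noncomputable def weightedComp (hp : 0 < p.toReal) (σ : ι → ι) (hσ : σ.Injective)
    (w : ι → 𝕜) (hw : ∀ k, ‖w k‖ ≤ 1) : lp (fun _ : ι => 𝕜) p →L[𝕜] lp (fun _ : ι => 𝕜) p :=
  LinearMap.mkContinuous
    { toFun x := ⟨fun k => w k * x (σ k), memℓp_gen' (sum_rpow_norm_mul_comp_le hp hσ hw x)⟩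
      map_add' x y := lp.ext <| funext fun k => mul_add (w k) (x (σ k)) (y (σ k))
      map_smul' c x := lp.ext <| funext fun k => mul_left_comm (w k) c (x (σ k)) }
    1 fun x => by
      rw [one_mul]
      exact lp.norm_le_of_forall_sum_le hp (norm_nonneg x)
        (sum_rpow_norm_mul_comp_le hp hσ hw x)

variable (hp : 0 < p.toReal) (hσ : σ.Injective) (hw : ∀ k, ‖w k‖ ≤ 1)

theorem weightedComp_apply (x : lp (fun _ : ι => 𝕜) p) (k : ι) :
    weightedComp hp σ hσ w hw x k = w k * x (σ k) :=
  rfl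

variable [DecidableEq ι]

theorem weightedComp_single (k : ι) :
    weightedComp hp σ hσ w hw (lp.single p (σ k) 1) = w k • lp.single p k 1 := by
  ext m
  by_cases h : m = k <;> simp [weightedComp_apply, hσ.eq_iff, h]

theorem weightedComp_single_of_notMem_range {n : ι} (hn : n ∉ Set.range σ) :
    weightedComp hp σ hσ w hw (lp.single p n 1) = 0 := by
  ext m
  have : σ m ≠ n := fun h => hn ⟨m, h⟩
  simp [weightedComp_apply, this]

end WeightedComposition

theorem adjoint_apply_of_apply_single {ι 𝕜 : Type*} [RCLike 𝕜] [DecidableEq ι]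
    {T : ℓ²(ι, 𝕜) →L[𝕜] ℓ²(ι, 𝕜)} {v : ι → 𝕜} {τ : ι → ι}
    (hT : ∀ k, T (lp.single 2 k 1) = v k • lp.single 2 (τ k) 1) (y : ℓ²(ι, 𝕜)) (k : ι) :
    adjoint T y k = conj (v k) * y (τ k) :=
  calc adjoint T y k = ⟪lp.single 2 k 1, adjoint T y⟫_𝕜 := by simp [lp.inner_single_left]
    _ = ⟪T (lp.single 2 k 1), y⟫_𝕜 := ContinuousLinearMap.adjoint_inner_right _ _ _
    _ = conj (v k) * y (τ k) := by simp [hT, inner_smul_left, lp.inner_single_left]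

end lp

namespace SUq2

variable {q : ℝ}

noncomputable def coeff (q : ℝ) (i : ℕ) : ℝ := √(1 - q ^ (2 * i))

@[simp]
theorem coeff_zero : coeff q 0 = 0 := by
  simp [coeff]

theorem norm_coeff_le_one (i : ℕ) : ‖(coeff q i : ℂ)‖ ≤ 1 := by
  rw [Complex.norm_real, coeff, Real.norm_of_nonneg (Real.sqrt_nonneg _), Real.sqrt_le_one]
  have : 0 ≤ q ^ (2 * i) := by rw [pow_mul]; positivity
  linarith

theorem coeff_mul_self (hq : |q| ≤ 1) (i : ℕ) :
    (coeff q i : ℂ) * coeff q i = 1 - (q : ℂ) ^ (2 * i) := by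
  have : q ^ (2 * i) ≤ 1 := by
    rw [pow_mul]
    exact pow_le_one₀ (sq_nonneg q) (sq_le_one_iff_abs_le_one q |>.2 hq)
  rw [← Complex.ofReal_mul, coeff, Real.mul_self_sqrt (by linarith)]
  push_cast
  ring

theorem norm_pow_le_one (hq : |q| ≤ 1) (i : ℕ) : ‖(q : ℂ) ^ i‖ ≤ 1 := by
  rw [norm_pow, Complex.norm_real, Real.norm_eq_abs]
  exact pow_le_one₀ (abs_nonneg q) hq

noncomputable def alpha (q : ℝ) : ℓ²(ℕ × ℤ, ℂ) →L[ℂ] ℓ²(ℕ × ℤ, ℂ) :=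
  lp.weightedComp (by norm_num) (Prod.map (· + 1) id)
    ((add_left_injective 1).prodMap injective_id)
    (fun k => coeff q (k.1 + 1)) fun _ => norm_coeff_le_one _

noncomputable def gamma (hq : |q| ≤ 1) : ℓ²(ℕ × ℤ, ℂ) →L[ℂ] ℓ²(ℕ × ℤ, ℂ) :=
  lp.weightedComp (by norm_num) (Prod.map id (· - 1)) (injective_id.prodMap sub_left_injective)
    (fun k => (q : ℂ) ^ k.1) fun _ => norm_pow_le_one hq _

theorem alpha_apply (x : ℓ²(ℕ × ℤ, ℂ)) (i : ℕ) (j : ℤ) :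
    alpha q x (i, j) = coeff q (i + 1) * x (i + 1, j) :=
  rfl

theorem gamma_apply (hq : |q| ≤ 1) (x : ℓ²(ℕ × ℤ, ℂ)) (i : ℕ) (j : ℤ) :
    gamma hq x (i, j) = q ^ i * x (i, j - 1) :=
  rfl

-- At `i = 0` the right side is `0 • e_{(0, j)}`: `0 - 1 = 0` in `ℕ`, but `coeff q 0 = 0`.
theorem alpha_single (i : ℕ) (j : ℤ) :
    alpha q (lp.single 2 (i, j) 1) = (coeff q i : ℂ) • lp.single 2 (i - 1, j) 1 := by
  rcases i with _ | i
  · rw [alpha, lp.weightedComp_single_of_notMem_range _ _ _ (by simp), coeff_zero]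
    simp
  · exact lp.weightedComp_single _ _ _ (i, j)

theorem gamma_single (hq : |q| ≤ 1) (i : ℕ) (j : ℤ) :
    gamma hq (lp.single 2 (i, j) 1) = (q : ℂ) ^ i • lp.single 2 (i, j + 1) 1 := by
  rw [show ((i, j) : ℕ × ℤ) = Prod.map id (· - 1) (i, j + 1) by simp]
  exact lp.weightedComp_single _ _ _ _

theorem adjoint_alpha_apply (x : ℓ²(ℕ × ℤ, ℂ)) (i : ℕ) (j : ℤ) :
    adjoint (alpha q) x (i, j) = coeff q i * x (i - 1, j) := by
  simpa using lp.adjoint_apply_of_apply_single (fun k => alpha_single k.1 k.2) x (i, j)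

theorem adjoint_gamma_apply (hq : |q| ≤ 1) (x : ℓ²(ℕ × ℤ, ℂ)) (i : ℕ) (j : ℤ) :
    adjoint (gamma hq) x (i, j) = q ^ i * x (i, j + 1) := by
  simpa using lp.adjoint_apply_of_apply_single (fun k => gamma_single hq k.1 k.2) x (i, j)

variable (hq : |q| ≤ 1)

theorem adjoint_gamma_mul_gamma :
    adjoint (gamma hq) * gamma hq = gamma hq * adjoint (gamma hq) := by
  ext x ⟨i, j⟩
  simp only [mul_apply_eq_comp, adjoint_gamma_apply, gamma_apply, add_sub_cancel_right,
    sub_add_cancel]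

theorem alpha_mul_gamma : alpha q * gamma hq = (q : ℂ) • (gamma hq * alpha q) := by
  ext x ⟨i, j⟩
  simp only [mul_apply_eq_comp, smul_apply, lp.coeFn_smul, Pi.smul_apply, smul_eq_mul,
    gamma_apply, alpha_apply]
  ring

theorem alpha_mul_adjoint_gamma :
    alpha q * adjoint (gamma hq) = (q : ℂ) • (adjoint (gamma hq) * alpha q) := by
  ext x ⟨i, j⟩
  simp only [mul_apply_eq_comp, smul_apply, lp.coeFn_smul, Pi.smul_apply, smul_eq_mul,
    adjoint_gamma_apply, alpha_apply]
  ring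

theorem adjoint_alpha_mul_alpha_add_adjoint_gamma_mul_gamma :
    adjoint (alpha q) * alpha q + adjoint (gamma hq) * gamma hq = 1 := by
  ext x ⟨i, j⟩
  simp only [add_apply, mul_apply_eq_comp, one_apply_eq_self, lp.coeFn_add, Pi.add_apply,
    adjoint_alpha_apply, adjoint_gamma_apply, gamma_apply, alpha_apply, add_sub_cancel_right]
  rcases i with _ | i
  · simp
  · rw [Nat.add_sub_cancel]
    linear_combination x (i + 1, j) * coeff_mul_self hq (i + 1)

theorem alpha_mul_adjoint_alpha_add_sq_smul_adjoint_gamma_mul_gamma :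
    alpha q * adjoint (alpha q) + ((q : ℂ) ^ 2) • (adjoint (gamma hq) * gamma hq) = 1 := by
  ext x ⟨i, j⟩
  simp only [add_apply, smul_apply, mul_apply_eq_comp, one_apply_eq_self, lp.coeFn_add,
    lp.coeFn_smul, Pi.add_apply, Pi.smul_apply, smul_eq_mul, adjoint_alpha_apply,
    adjoint_gamma_apply, gamma_apply, alpha_apply, add_sub_cancel_right, Nat.add_sub_cancel]
  linear_combination x (i, j) * coeff_mul_self hq (i + 1)

end SUq2

theorem stmt10_general (q : ℝ) (hq : q ∈ Set.Ioo (-1 : ℝ) 1) :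
    ∃ α γ : lp (fun _ : ℕ × ℤ => ℂ) 2 →L[ℂ] lp (fun _ : ℕ × ℤ => ℂ) 2,
      (∀ (i : ℕ) (j : ℤ), α (lp.single 2 (i, j) (1 : ℂ))
          = ((Real.sqrt (1 - q ^ (2 * i)) : ℝ) : ℂ) • lp.single 2 (i - 1, j) (1 : ℂ)) ∧
      (∀ (i : ℕ) (j : ℤ), γ (lp.single 2 (i, j) (1 : ℂ))
          = ((q : ℂ) ^ i) • lp.single 2 (i, j + 1) (1 : ℂ)) ∧
      ContinuousLinearMap.adjoint γ * γ = γ * ContinuousLinearMap.adjoint γ ∧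
      α * γ = (q : ℂ) • (γ * α) ∧
      α * ContinuousLinearMap.adjoint γ
        = (q : ℂ) • (ContinuousLinearMap.adjoint γ * α) ∧
      ContinuousLinearMap.adjoint α * α + ContinuousLinearMap.adjoint γ * γ = 1 ∧
      α * ContinuousLinearMap.adjoint α
        + ((q : ℂ) ^ 2) • (ContinuousLinearMap.adjoint γ * γ) = 1 := by
  have hq' : |q| ≤ 1 := (abs_lt.2 hq).le
  exact ⟨SUq2.alpha q, SUq2.gamma hq', SUq2.alpha_single, SUq2.gamma_single hq',
    SUq2.adjoint_gamma_mul_gamma hq', SUq2.alpha_mul_gamma hq', SUq2.alpha_mul_adjoint_gamma hq',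
    SUq2.adjoint_alpha_mul_alpha_add_adjoint_gamma_mul_gamma hq',
    SUq2.alpha_mul_adjoint_alpha_add_sq_smul_adjoint_gamma_mul_gamma hq'⟩

/-- Existence of the concrete `SU_q(2)` generators: for `q ∈ (-1,1) \ {0}` there exist
bounded operators `α, γ` on `ℓ²(ℕ) ⊗ ℓ²(ℤ) = ℓ²(ℕ × ℤ)` acting on the standard basis by
`α(e_i ⊗ f_j) = √(1 - q^{2i}) e_{i-1} ⊗ f_j` and `γ(e_i ⊗ f_j) = q^i e_i ⊗ f_{j+1}`
(with `e_{-1} = 0`, which is automatic since the coefficient vanishes at `i = 0`),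
and these satisfy the `SU_q(2)` relations. -/
theorem stmt10 (q : ℝ) (hq : q ∈ Set.Ioo (-1 : ℝ) 1) (hq0 : q ≠ 0) :
    ∃ α γ : lp (fun _ : ℕ × ℤ => ℂ) 2 →L[ℂ] lp (fun _ : ℕ × ℤ => ℂ) 2,
      (∀ (i : ℕ) (j : ℤ), α (lp.single 2 (i, j) (1 : ℂ))
          = ((Real.sqrt (1 - q ^ (2 * i)) : ℝ) : ℂ) • lp.single 2 (i - 1, j) (1 : ℂ)) ∧
      (∀ (i : ℕ) (j : ℤ), γ (lp.single 2 (i, j) (1 : ℂ))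
          = ((q : ℂ) ^ i) • lp.single 2 (i, j + 1) (1 : ℂ)) ∧
      ContinuousLinearMap.adjoint γ * γ = γ * ContinuousLinearMap.adjoint γ ∧
      α * γ = (q : ℂ) • (γ * α) ∧
      α * ContinuousLinearMap.adjoint γ
        = (q : ℂ) • (ContinuousLinearMap.adjoint γ * α) ∧
      ContinuousLinearMap.adjoint α * α + ContinuousLinearMap.adjoint γ * γ = 1 ∧
      α * ContinuousLinearMap.adjoint α
        + ((q : ℂ) ^ 2) • (ContinuousLinearMap.adjoint γ * γ) = 1 :=
  stmt10_general q hq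
end

section
/- Let q ∈ (-1,1)\{0} and let φ be the Haar state on SU_q(2), defined on operators x on ℓ²(ℕ) ⊗ ℓ²(ℤ) by φ(x) = (1-q²) Σ_{k∈ℕ} q^{2k} ⟨e_k ⊗ f_0, x (e_k ⊗ f_0)⟩. Then φ is a state (φ(1) = 1 and φ(x*x) ≥ 0 for all x), and for the basis monomials x = α^k γ^l (γ*)^m (with k ∈ ℤ, l, m ∈ ℕ, and α^k := (α*)^{|k|} for k < 0), φ(x) = 0 unless k = 0 and l = m. -/
/-!
Each of `α, α*, γ, γ*` maps every basis vector `e_i ⊗ f_j` to a multiple of a single basis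
vector, shifting the index `(i, j) ∈ ℤ × ℤ` by a fixed degree: `(-1, 0)`, `(1, 0)`, `(0, 1)` and
`(0, -1)`. Degrees add under composition, so `α^k γ^l (γ*)^m` has degree `(-k, l - m)`; when this
is nonzero every diagonal matrix coefficient vanishes, and so does `φ`, which only sees diagonal
coefficients. That `φ` is a state is a geometric series and the positivity of `x* x`.
-/

open scoped ComplexOrder
open ContinuousLinearMap

local notation "ℓ²[" ι ", " 𝕜 "]" => lp (fun _ : ι => 𝕜) 2

section Graded

variable {ι G 𝕜 : Type*} [DecidableEq ι] [AddCommGroup G] [RCLike 𝕜]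

lemma lp.coe_eq_inner_single (v : ℓ²[ι, 𝕜]) (r : ι) :
    v r = inner 𝕜 (lp.single 2 r (1 : 𝕜)) v := by
  simp [lp.inner_single_left]

lemma lp.eq_smul_single_of_support {v : ℓ²[ι, 𝕜]} {s : ι} (h : ∀ r, v r ≠ 0 → r = s) :
    v = v s • lp.single 2 s 1 := by
  refine lp.ext (funext fun r => ?_)
  by_cases hr : r = s
  · subst hr; simp
  · simp [lp.single_apply, hr, not_imp_comm.mp (h r) hr]

def IsHomogeneous (deg : ι → G) (T : ℓ²[ι, 𝕜] →L[𝕜] ℓ²[ι, 𝕜]) (d : G) : Prop :=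
  ∀ p r, T (lp.single 2 p 1) r ≠ 0 → deg r = deg p + d

namespace IsHomogeneous

variable {deg : ι → G}

lemma of_apply_single {T : ℓ²[ι, 𝕜] →L[𝕜] ℓ²[ι, 𝕜]} {d : G} (f : ι → 𝕜) (σ : ι → ι)
    (hT : ∀ p, T (lp.single 2 p 1) = f p • lp.single 2 (σ p) 1)
    (hσ : ∀ p, f p ≠ 0 → deg (σ p) = deg p + d) : IsHomogeneous deg T d := by
  intro p r hr
  rw [hT] at hr
  by_cases hrσ : r = σ p
  · subst hrσ
    exact hσ p (by simpa using hr)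
  · simp [lp.single_apply, hrσ] at hr

lemma one : IsHomogeneous deg (1 : ℓ²[ι, 𝕜] →L[𝕜] ℓ²[ι, 𝕜]) 0 := by
  intro p r hr
  by_cases hrp : r = p
  · simp [hrp]
  · simp [lp.single_apply, hrp] at hr

lemma mul (hdeg : Function.Injective deg) {S T : ℓ²[ι, 𝕜] →L[𝕜] ℓ²[ι, 𝕜]} {d d' : G}
    (hS : IsHomogeneous deg S d) (hT : IsHomogeneous deg T d') :
    IsHomogeneous deg (S * T) (d + d') := by
  intro p r hr
  rw [mul_apply_eq_comp] at hr
  obtain ⟨s, hs⟩ : ∃ s, T (lp.single 2 p 1) s ≠ 0 := by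
    by_contra! h
    rw [show T (lp.single 2 p 1) = 0 from lp.ext (funext h), map_zero] at hr
    exact hr rfl
  have hsupp : ∀ r', T (lp.single 2 p 1) r' ≠ 0 → r' = s :=
    fun r' hr' => hdeg ((hT p r' hr').trans (hT p s hs).symm)
  rw [lp.eq_smul_single_of_support hsupp, map_smul, lp.coeFn_smul, Pi.smul_apply,
    smul_eq_mul] at hr
  rw [hS s r (right_ne_zero_of_mul hr), hT p s hs]
  abel

lemma pow (hdeg : Function.Injective deg) {T : ℓ²[ι, 𝕜] →L[𝕜] ℓ²[ι, 𝕜]} {d : G}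
    (hT : IsHomogeneous deg T d) (n : ℕ) : IsHomogeneous deg (T ^ n) (n • d) := by
  induction n with
  | zero => simpa using one
  | succ n ih =>
    rw [pow_succ, succ_nsmul]
    exact ih.mul hdeg hT

lemma adjoint {T : ℓ²[ι, 𝕜] →L[𝕜] ℓ²[ι, 𝕜]} {d : G} (hT : IsHomogeneous deg T d) :
    IsHomogeneous deg (adjoint T) (-d) := by
  intro p r hr
  rw [lp.coe_eq_inner_single, adjoint_inner_right, ← inner_conj_symm,
    ← lp.coe_eq_inner_single, ne_eq, map_eq_zero] at hr
  rw [hT r p hr]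
  abel

lemma inner_single_apply_single_eq_zero {T : ℓ²[ι, 𝕜] →L[𝕜] ℓ²[ι, 𝕜]} {d : G}
    (hT : IsHomogeneous deg T d) (hd : d ≠ 0) (p : ι) :
    inner 𝕜 (lp.single 2 p (1 : 𝕜)) (T (lp.single 2 p 1)) = 0 := by
  rw [← lp.coe_eq_inner_single]
  by_contra h
  exact hd (by simpa using hT p p h)

end IsHomogeneous

end Graded

namespace SUq2

def toLattice (p : ℕ × ℤ) : ℤ × ℤ := ((p.1 : ℤ), p.2)

lemma toLattice_injective : Function.Injective toLattice := by
  rintro ⟨i, j⟩ ⟨i', j'⟩ h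
  simp_all [toLattice]

section Generators

variable {q : ℝ} {α γ : ℓ²[ℕ × ℤ, ℂ] →L[ℂ] ℓ²[ℕ × ℤ, ℂ]}

lemma isHomogeneous_alpha
    (hα : ∀ (i : ℕ) (j : ℤ), α (lp.single 2 (i, j) (1 : ℂ))
        = ((Real.sqrt (1 - q ^ (2 * i)) : ℝ) : ℂ) • lp.single 2 (i - 1, j) (1 : ℂ)) :
    IsHomogeneous toLattice α (-1, 0) := by
  refine .of_apply_single (fun p => ((Real.sqrt (1 - q ^ (2 * p.1)) : ℝ) : ℂ))
    (fun p => (p.1 - 1, p.2)) (fun p => hα p.1 p.2) ?_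
  rintro ⟨i, j⟩ hi
  -- `α e_0 = 0` because its coefficient is `√(1 - q⁰) = 0`.
  have hi0 : i ≠ 0 := by rintro rfl; simp at hi
  simp only [toLattice, Prod.mk_add_mk, add_zero, Prod.mk.injEq, and_true]
  omega

lemma isHomogeneous_gamma
    (hγ : ∀ (i : ℕ) (j : ℤ), γ (lp.single 2 (i, j) (1 : ℂ))
        = ((q : ℂ) ^ i) • lp.single 2 (i, j + 1) (1 : ℂ)) :
    IsHomogeneous toLattice γ (0, 1) :=
  .of_apply_single (fun p => (q : ℂ) ^ p.1) (fun p => (p.1, p.2 + 1)) (fun p => hγ p.1 p.2)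
    (fun _ _ => by simp [toLattice])

lemma isHomogeneous_monomial (hα : IsHomogeneous toLattice α (-1, 0))
    (hγ : IsHomogeneous toLattice γ (0, 1)) (k : ℤ) (l m : ℕ) :
    IsHomogeneous toLattice ((if 0 ≤ k then α ^ k.toNat else (adjoint α) ^ (-k).toNat)
      * γ ^ l * (adjoint γ) ^ m) (-k, l - m) := by
  have hαk : IsHomogeneous toLattice
      (if 0 ≤ k then α ^ k.toNat else (adjoint α) ^ (-k).toNat) (-k, 0) := by
    split_ifs with hk
    · convert hα.pow toLattice_injective k.toNat using 1
      ext <;> simp [hk]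
    · convert hα.adjoint.pow toLattice_injective (-k).toNat using 1
      ext <;> simp [(not_le.mp hk).le]
  convert (hαk.mul toLattice_injective (hγ.pow toLattice_injective l)).mul toLattice_injective
    (hγ.adjoint.pow toLattice_injective m) using 1
  simp [sub_eq_add_neg]

end Generators

end SUq2

open SUq2 in
theorem stmt12_general (q : ℝ) (hq : q ∈ Set.Ioo (-1 : ℝ) 1)
    (α γ : lp (fun _ : ℕ × ℤ => ℂ) 2 →L[ℂ] lp (fun _ : ℕ × ℤ => ℂ) 2)
    (hα : ∀ (i : ℕ) (j : ℤ), α (lp.single 2 (i, j) (1 : ℂ))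
        = ((Real.sqrt (1 - q ^ (2 * i)) : ℝ) : ℂ) • lp.single 2 (i - 1, j) (1 : ℂ))
    (hγ : ∀ (i : ℕ) (j : ℤ), γ (lp.single 2 (i, j) (1 : ℂ))
        = ((q : ℂ) ^ i) • lp.single 2 (i, j + 1) (1 : ℂ))
    (φ : (lp (fun _ : ℕ × ℤ => ℂ) 2 →L[ℂ] lp (fun _ : ℕ × ℤ => ℂ) 2) → ℂ)
    (hφ : ∀ x, φ x = (1 - (q : ℂ) ^ 2) * ∑' k : ℕ,
        (q : ℂ) ^ (2 * k) *
          (inner ℂ (lp.single 2 (k, (0 : ℤ)) (1 : ℂ)) (x (lp.single 2 (k, (0 : ℤ)) (1 : ℂ))) : ℂ)) :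
    φ 1 = 1 ∧
    (∀ x, 0 ≤ φ (ContinuousLinearMap.adjoint x * x)) ∧
    (∀ (k : ℤ) (l m : ℕ), (k ≠ 0 ∨ l ≠ m) →
      φ ((if 0 ≤ k then α ^ k.toNat else (ContinuousLinearMap.adjoint α) ^ (-k).toNat)
          * γ ^ l * (ContinuousLinearMap.adjoint γ) ^ m) = 0) := by
  have hq2 : ‖(q : ℂ) ^ 2‖ < 1 := by
    rw [norm_pow, Complex.norm_real, Real.norm_eq_abs, sq_abs]
    nlinarith [hq.1, hq.2]
  refine ⟨?_, fun x => ?_, fun k l m hklm => ?_⟩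
  · have hq2_ne : 1 - (q : ℂ) ^ 2 ≠ 0 := sub_ne_zero.mpr (fun h => by simp [← h] at hq2)
    simp [hφ, pow_mul, tsum_geometric_of_norm_lt_one hq2, hq2_ne]
  · have hq_sq_le : (q : ℂ) ^ 2 ≤ 1 := by exact_mod_cast (by nlinarith [hq.1, hq.2] : q ^ 2 ≤ 1)
    rw [hφ]
    refine mul_nonneg (sub_nonneg.mpr hq_sq_le) (tsum_nonneg fun n => mul_nonneg ?_ ?_)
    · rw [pow_mul]
      exact pow_nonneg (by exact_mod_cast sq_nonneg q) n
    · exact (isPositive_adjoint_comp_self x).inner_nonneg_right _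
  · have hdeg : ((-k, (l : ℤ) - m) : ℤ × ℤ) ≠ 0 := by
      simp only [ne_eq, Prod.ext_iff, Prod.fst_zero, Prod.snd_zero]
      omega
    have hmon := isHomogeneous_monomial (isHomogeneous_alpha hα) (isHomogeneous_gamma hγ) k l m
    simp only [hφ, hmon.inner_single_apply_single_eq_zero hdeg, mul_zero, tsum_zero]

/-- The Haar state of `SU_q(2)`: with the concrete generators `α, γ` on `ℓ²(ℕ × ℤ)` and
`φ(x) = (1-q²) Σ_k q^{2k} ⟨e_k ⊗ f_0, x (e_k ⊗ f_0)⟩`, the functional `φ` is a state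
(`φ(1) = 1` and `φ(x*x) ≥ 0`), and it vanishes on the basis monomials
`α^k γ^l (γ*)^m` (with `α^k := (α*)^{|k|}` for `k < 0`) unless `k = 0` and `l = m`. -/
theorem stmt12 (q : ℝ) (hq : q ∈ Set.Ioo (-1 : ℝ) 1) (hq0 : q ≠ 0)
    (α γ : lp (fun _ : ℕ × ℤ => ℂ) 2 →L[ℂ] lp (fun _ : ℕ × ℤ => ℂ) 2)
    (hα : ∀ (i : ℕ) (j : ℤ), α (lp.single 2 (i, j) (1 : ℂ))
        = ((Real.sqrt (1 - q ^ (2 * i)) : ℝ) : ℂ) • lp.single 2 (i - 1, j) (1 : ℂ))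
    (hγ : ∀ (i : ℕ) (j : ℤ), γ (lp.single 2 (i, j) (1 : ℂ))
        = ((q : ℂ) ^ i) • lp.single 2 (i, j + 1) (1 : ℂ))
    (φ : (lp (fun _ : ℕ × ℤ => ℂ) 2 →L[ℂ] lp (fun _ : ℕ × ℤ => ℂ) 2) → ℂ)
    (hφ : ∀ x, φ x = (1 - (q : ℂ) ^ 2) * ∑' k : ℕ,
        (q : ℂ) ^ (2 * k) *
          (inner ℂ (lp.single 2 (k, (0 : ℤ)) (1 : ℂ)) (x (lp.single 2 (k, (0 : ℤ)) (1 : ℂ))) : ℂ)) :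
    φ 1 = 1 ∧
    (∀ x, 0 ≤ φ (ContinuousLinearMap.adjoint x * x)) ∧
    (∀ (k : ℤ) (l m : ℕ), (k ≠ 0 ∨ l ≠ m) →
      φ ((if 0 ≤ k then α ^ k.toNat else (ContinuousLinearMap.adjoint α) ^ (-k).toNat)
          * γ ^ l * (ContinuousLinearMap.adjoint γ) ^ m) = 0) :=
  stmt12_general q hq α γ hα hγ φ hφ
end
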